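/- For every quaternionic n×n matrix M, det 𝒵[M†] = det 𝒵[M], where M† is the conjugate transpose of M (i.e., (M†)_{ij} = conjugate of M_{ji}). In particular, if U ∈ ℍ^{n×n} is unitary (U†U = I), then det 𝒵[U] = 1. -/

import Mathlib

open Matrix
open scoped NNReal

/-- The complex number `z` with `q = z + j·w` for a quaternion `q`. -/
noncomputable def quatC1 (q : Quaternion ℝ) : ℂ := ⟨q.re, q.imI⟩

/-- The complex number `w` with `q = z + j·w` for a quaternion `q`. -/
noncomputable def quatC2 (q : Quaternion ℝ) : ℂ := ⟨q.imJ, -q.imK⟩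

/-- The complexification `𝒵[M] = [[M₁, −M₂*],[M₂, M₁*]]` of a quaternionic matrix
`M = M₁ + j·M₂`, where `*` denotes entrywise complex conjugation. -/
noncomputable def Zmat {m : Type*} [Fintype m] [DecidableEq m]
    (M : Matrix m m (Quaternion ℝ)) : Matrix (m ⊕ m) (m ⊕ m) ℂ :=
  Matrix.fromBlocks (M.map quatC1) (-(M.map fun q => star (quatC2 q)))
    (M.map quatC2) (M.map fun q => star (quatC1 q))

set_option linter.unnecessarySeqFocus false
set_option linter.unusedSectionVars false
set_option linter.dupNamespace false

namespace QPort
open Sum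

variable {K : Type*} [DivisionRing K] {n : Type*} [DecidableEq n]

/-- Transvection matrix over a possibly noncommutative ring. -/
def tv (i j : n) (c : K) : Matrix n n K := 1 + single i j c

variable [Fintype n]

@[simp] theorem tv_mul_apply_same (i j b : n) (c : K) (M : Matrix n n K) :
    (tv i j c * M) i b = M i b + c * M j b := by simp [tv, Matrix.add_mul]

@[simp] theorem mul_tv_apply_same (i j a : n) (c : K) (M : Matrix n n K) :
    (M * tv i j c) a j = M a j + M a i * c := by simp [tv, Matrix.mul_add]

@[simp] theorem tv_mul_apply_of_ne (i j a b : n) (ha : a ≠ i) (c : K) (M : Matrix n n K) :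
    (tv i j c * M) a b = M a b := by simp [tv, Matrix.add_mul, ha]

@[simp] theorem mul_tv_apply_of_ne (i j a b : n) (hb : b ≠ j) (c : K) (M : Matrix n n K) :
    (M * tv i j c) a b = M a b := by simp [tv, Matrix.mul_add, hb]

/-- Analogue of `TransvectionStruct`. -/
structure TS (n : Type*) (K : Type*) where
  (i j : n)
  hij : i ≠ j
  c : K

namespace TS

def toMatrix (t : TS n K) : Matrix n n K := tv t.i t.j t.c

@[simp] theorem toMatrix_mk (i j : n) (hij : i ≠ j) (c : K) :
    TS.toMatrix ⟨i, j, hij, c⟩ = tv i j c := rfl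

end TS

namespace Pivot

variable {r : ℕ} (M : Matrix (Fin r ⊕ Unit) (Fin r ⊕ Unit) K)

open Unit Fin

/-- Left operations clearing the last column. -/
def listTransvecCol : List (Matrix (Fin r ⊕ Unit) (Fin r ⊕ Unit) K) :=
  List.ofFn fun i : Fin r =>
    tv (inl i) (inr unit) <| -M (inl i) (inr unit) * (M (inr unit) (inr unit))⁻¹

/-- Right operations clearing the last row. -/
def listTransvecRow : List (Matrix (Fin r ⊕ Unit) (Fin r ⊕ Unit) K) :=
  List.ofFn fun i : Fin r =>
    tv (inr unit) (inl i) <| -(M (inr unit) (inr unit))⁻¹ * M (inr unit) (inl i)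

@[simp] theorem length_listTransvecCol : (listTransvecCol M).length = r := by
  simp [listTransvecCol]

@[simp] theorem length_listTransvecRow : (listTransvecRow M).length = r := by
  simp [listTransvecRow]

theorem listTransvecCol_mul_last_row_drop (i : Fin r ⊕ Unit) {k : ℕ} (hk : k ≤ r) :
    (((listTransvecCol M).drop k).prod * M) (inr unit) i = M (inr unit) i := by
  induction hk using Nat.decreasingInduction with
  | of_succ n hn IH =>
    have hn' : n < (listTransvecCol M).length := by simpa [listTransvecCol] using hn
    rw [List.drop_eq_getElem_cons hn']
    have A : (listTransvecCol M)[n] =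
        tv (inl (⟨n, hn⟩ : Fin r)) (inr unit)
          (-M (inl (⟨n, hn⟩ : Fin r)) (inr unit) * (M (inr unit) (inr unit))⁻¹) := by
      simp [listTransvecCol]
    rw [A, List.prod_cons, Matrix.mul_assoc, tv_mul_apply_of_ne _ _ _ _ (by simp) _ _]
    exact IH
  | self =>
    simp only [length_listTransvecCol, le_refl, List.drop_eq_nil_of_le, List.prod_nil,
      Matrix.one_mul]

theorem listTransvecCol_mul_last_row (i : Fin r ⊕ Unit) :
    ((listTransvecCol M).prod * M) (inr unit) i = M (inr unit) i := by
  simpa using listTransvecCol_mul_last_row_drop M i (Nat.zero_le _)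

theorem listTransvecCol_mul_last_col (hM : M (inr unit) (inr unit) ≠ 0) (i : Fin r) :
    ((listTransvecCol M).prod * M) (inl i) (inr unit) = 0 := by
  suffices H :
    ∀ k : ℕ,
      k ≤ r →
        (((listTransvecCol M).drop k).prod * M) (inl i) (inr unit) =
          if k ≤ i then 0 else M (inl i) (inr unit) by
    simpa only [List.drop, _root_.zero_le, ite_true] using H 0 (Nat.zero_le _)
  intro k hk
  induction hk using Nat.decreasingInduction with
  | of_succ n hn IH =>
    have hn' : n < (listTransvecCol M).length := by simpa [listTransvecCol] using hn
    let n' : Fin r := ⟨n, hn⟩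
    rw [List.drop_eq_getElem_cons hn']
    have A :
      (listTransvecCol M)[n] =
        tv (inl n') (inr unit) (-M (inl n') (inr unit) * (M (inr unit) (inr unit))⁻¹) := by
      simp [listTransvecCol]; rfl
    simp only [Matrix.mul_assoc, A, List.prod_cons]
    by_cases h : n' = i
    · have hni : n = i := by
        cases i
        simp only [n', Fin.mk_eq_mk] at h
        simp [h]
      simp only [h, tv_mul_apply_same, IH, ← hni, add_le_iff_nonpos_right,
          listTransvecCol_mul_last_row_drop _ _ hn]
      simp only [mul_assoc, inv_mul_cancel₀ hM, mul_one]
      simp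
    · have hni : n ≠ i := by
        rintro rfl
        cases i
        simp [n'] at h
      simp only [ne_eq, inl.injEq, Ne.symm h, not_false_eq_true, tv_mul_apply_of_ne]
      rw [IH]
      rcases le_or_gt (n + 1) i with (hi | hi)
      · simp only [hi, n.le_succ.trans hi, if_true]
      · rw [if_neg, if_neg]
        · simpa only [hni.symm, not_le, or_false] using Nat.lt_succ_iff_lt_or_eq.1 hi
        · simpa only [not_le] using hi
  | self =>
    simp only [length_listTransvecCol, le_refl, List.drop_eq_nil_of_le, List.prod_nil,
      Matrix.one_mul]
    rw [if_neg]
    simpa only [not_le] using i.2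

theorem mul_listTransvecRow_last_col_take (i : Fin r ⊕ Unit) {k : ℕ} (hk : k ≤ r) :
    (M * ((listTransvecRow M).take k).prod) i (inr unit) = M i (inr unit) := by
  induction' k with k IH
  · simp only [Matrix.mul_one, List.take_zero, List.prod_nil, List.take, Matrix.mul_one]
  · have hkr : k < r := hk
    let k' : Fin r := ⟨k, hkr⟩
    have :
      (listTransvecRow M)[k]? =
        ↑(tv (inr Unit.unit) (inl k')
            (-(M (inr Unit.unit) (inr Unit.unit))⁻¹ * M (inr Unit.unit) (inl k'))) := by
      simp only [listTransvecRow, List.ofFnNthVal, hkr, dif_pos, List.getElem?_ofFn]; rfl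
    simp only [List.take_succ, ← Matrix.mul_assoc, this, List.prod_append, Matrix.mul_one,
      List.prod_cons, List.prod_nil, Option.toList_some]
    rw [mul_tv_apply_of_ne, IH hkr.le]
    simp only [Ne, not_false_iff, reduceCtorEq]

theorem mul_listTransvecRow_last_col (i : Fin r ⊕ Unit) :
    (M * (listTransvecRow M).prod) i (inr unit) = M i (inr unit) := by
  have A : (listTransvecRow M).length = r := by simp [listTransvecRow]
  rw [← List.take_length (l := listTransvecRow M), A]
  simpa using mul_listTransvecRow_last_col_take M i le_rfl

theorem mul_listTransvecRow_last_row (hM : M (inr unit) (inr unit) ≠ 0) (i : Fin r) :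
    (M * (listTransvecRow M).prod) (inr unit) (inl i) = 0 := by
  suffices H :
    ∀ k : ℕ,
      k ≤ r →
        (M * ((listTransvecRow M).take k).prod) (inr unit) (inl i) =
          if k ≤ i then M (inr unit) (inl i) else 0 by
    have A : (listTransvecRow M).length = r := by simp [listTransvecRow]
    rw [← List.take_length (l := listTransvecRow M), A]
    have : ¬r ≤ i := by simp
    simpa only [this, ite_eq_right_iff, ↓reduceIte] using H r le_rfl
  intro k hk
  induction' k with n IH
  · simp only [if_true, Matrix.mul_one, List.take_zero, zero_le', List.prod_nil]
  · have hnr : n < r := hk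
    let n' : Fin r := ⟨n, hnr⟩
    have A :
      (listTransvecRow M)[n]? =
        ↑(tv (inr unit) (inl n')
        (-(M (inr unit) (inr unit))⁻¹ * M (inr unit) (inl n'))) := by
      simp only [listTransvecRow, List.ofFnNthVal, hnr, dif_pos, List.getElem?_ofFn]; rfl
    simp only [List.take_succ, A, ← Matrix.mul_assoc, List.prod_append, Matrix.mul_one,
      List.prod_cons, List.prod_nil, Option.toList_some]
    by_cases h : n' = i
    · have hni : n = i := by
        cases i
        simp only [n', Fin.mk_eq_mk] at h
        simp only [h]
      have : ¬n.succ ≤ i := by simp only [← hni, n.lt_succ_self, not_le]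
      simp only [h, mul_tv_apply_same, List.take, if_false,
        mul_listTransvecRow_last_col_take _ _ hnr.le, hni.le, this, if_true, IH hnr.le]
      rw [neg_mul, mul_neg, ← mul_assoc, mul_inv_cancel₀ hM, one_mul, add_neg_cancel]
    · have hni : n ≠ i := by
        rintro rfl
        cases i
        tauto
      simp only [IH hnr.le, Ne, mul_tv_apply_of_ne, Ne.symm h, inl.injEq,
        not_false_eq_true]
      rcases le_or_gt (n + 1) i with (hi | hi)
      · simp [hi, n.le_succ.trans hi, if_true]
      · rw [if_neg, if_neg]
        · simpa only [not_le] using hi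
        · simpa only [hni.symm, not_le, or_false] using Nat.lt_succ_iff_lt_or_eq.1 hi

theorem listTransvecCol_mul_mul_listTransvecRow_last_col (hM : M (inr unit) (inr unit) ≠ 0)
    (i : Fin r) :
    ((listTransvecCol M).prod * M * (listTransvecRow M).prod) (inr unit) (inl i) = 0 := by
  have : listTransvecRow M = listTransvecRow ((listTransvecCol M).prod * M) := by
    simp [listTransvecRow, listTransvecCol_mul_last_row]
  rw [this]
  apply mul_listTransvecRow_last_row
  simpa [listTransvecCol_mul_last_row] using hM

theorem listTransvecCol_mul_mul_listTransvecRow_last_row (hM : M (inr unit) (inr unit) ≠ 0)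
    (i : Fin r) :
    ((listTransvecCol M).prod * M * (listTransvecRow M).prod) (inl i) (inr unit) = 0 := by
  have : listTransvecCol M = listTransvecCol (M * (listTransvecRow M).prod) := by
    simp [listTransvecCol, mul_listTransvecRow_last_col]
  rw [this, Matrix.mul_assoc]
  apply listTransvecCol_mul_last_col
  simpa [mul_listTransvecRow_last_col] using hM

theorem isTwoBlockDiagonal_listTransvecCol_mul_mul_listTransvecRow
    (hM : M (inr unit) (inr unit) ≠ 0) :
    IsTwoBlockDiagonal ((listTransvecCol M).prod * M * (listTransvecRow M).prod) := by
  constructor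
  · ext i j
    have : j = unit := by simp only [eq_iff_true_of_subsingleton]
    simp [toBlocks₁₂, this, listTransvecCol_mul_mul_listTransvecRow_last_row M hM]
  · ext i j
    have : i = unit := by simp only [eq_iff_true_of_subsingleton]
    simp [toBlocks₂₁, this, listTransvecCol_mul_mul_listTransvecRow_last_col M hM]

theorem exists_isTwoBlockDiagonal_of_ne_zero (hM : M (inr unit) (inr unit) ≠ 0) :
    ∃ L L' : List (TS (Fin r ⊕ Unit) K),
      IsTwoBlockDiagonal ((L.map TS.toMatrix).prod * M * (L'.map TS.toMatrix).prod) := by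
  let L : List (TS (Fin r ⊕ Unit) K) :=
    List.ofFn fun i : Fin r =>
      ⟨inl i, inr unit, by simp, -M (inl i) (inr unit) * (M (inr unit) (inr unit))⁻¹⟩
  let L' : List (TS (Fin r ⊕ Unit) K) :=
    List.ofFn fun i : Fin r =>
      ⟨inr unit, inl i, by simp, -(M (inr unit) (inr unit))⁻¹ * M (inr unit) (inl i)⟩
  refine ⟨L, L', ?_⟩
  have A : L.map TS.toMatrix = listTransvecCol M := by simp [L, listTransvecCol, Function.comp_def]
  have B : L'.map TS.toMatrix = listTransvecRow M := by simp [L', listTransvecRow, Function.comp_def]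
  rw [A, B]
  exact isTwoBlockDiagonal_listTransvecCol_mul_mul_listTransvecRow M hM

theorem exists_isTwoBlockDiagonal_list_transvec_mul_mul_list_transvec
    (M : Matrix (Fin r ⊕ Unit) (Fin r ⊕ Unit) K) :
    ∃ L L' : List (TS (Fin r ⊕ Unit) K),
      IsTwoBlockDiagonal ((L.map TS.toMatrix).prod * M * (L'.map TS.toMatrix).prod) := by
  by_cases H : IsTwoBlockDiagonal M
  · refine ⟨List.nil, List.nil, by simpa using H⟩
  by_cases hM : M (inr unit) (inr unit) ≠ 0
  · exact exists_isTwoBlockDiagonal_of_ne_zero M hM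
  push_neg at hM
  simp only [not_and_or, IsTwoBlockDiagonal, toBlocks₁₂, toBlocks₂₁, ← Matrix.ext_iff] at H
  have : ∃ i : Fin r, M (inl i) (inr unit) ≠ 0 ∨ M (inr unit) (inl i) ≠ 0 := by
    cases' H with H H
    · contrapose! H
      rintro i ⟨⟩
      exact (H i).1
    · contrapose! H
      rintro ⟨⟩ j
      exact (H j).2
  rcases this with ⟨i, h | h⟩
  · let M' := tv (inr Unit.unit) (inl i) 1 * M
    have hM' : M' (inr unit) (inr unit) ≠ 0 := by simpa [M', hM]
    rcases exists_isTwoBlockDiagonal_of_ne_zero M' hM' with ⟨L, L', hLL'⟩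
    rw [Matrix.mul_assoc] at hLL'
    refine ⟨L ++ [⟨inr unit, inl i, by simp, 1⟩], L', ?_⟩
    simp only [List.map_append, List.prod_append, Matrix.mul_one, TS.toMatrix_mk,
      List.prod_cons, List.prod_nil, List.map, Matrix.mul_assoc (L.map TS.toMatrix).prod]
    exact hLL'
  · let M' := M * tv (inl i) (inr unit) 1
    have hM' : M' (inr unit) (inr unit) ≠ 0 := by simpa [M', hM]
    rcases exists_isTwoBlockDiagonal_of_ne_zero M' hM' with ⟨L, L', hLL'⟩
    refine ⟨L, ⟨inl i, inr unit, by simp, 1⟩::L', ?_⟩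
    simp only [← Matrix.mul_assoc, TS.toMatrix_mk, List.prod_cons, List.map]
    rw [Matrix.mul_assoc (L.map TS.toMatrix).prod]
    exact hLL'

end Pivot

end QPort


section Lemmas

open scoped Quaternion

lemma quatC1_zero : quatC1 0 = 0 := by simp [quatC1, Complex.ext_iff]
lemma quatC2_zero : quatC2 0 = 0 := by simp [quatC2, Complex.ext_iff]
lemma quatC1_one : quatC1 1 = 1 := by simp [quatC1, Complex.ext_iff]
lemma quatC2_one : quatC2 1 = 0 := by simp [quatC2, Complex.ext_iff]
lemma quatC1_add (p q : Quaternion ℝ) : quatC1 (p + q) = quatC1 p + quatC1 q := by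
  simp [quatC1, Complex.ext_iff]
lemma quatC2_add (p q : Quaternion ℝ) : quatC2 (p + q) = quatC2 p + quatC2 q := by
  simp [quatC2, Complex.ext_iff]; ring
lemma quatC1_mul (p q : Quaternion ℝ) :
    quatC1 (p * q) = quatC1 p * quatC1 q - star (quatC2 p) * quatC2 q := by
  simp [quatC1, quatC2, Complex.ext_iff, Quaternion.re_mul, Quaternion.imI_mul,
    Complex.mul_re, Complex.mul_im] <;> constructor <;> ring
lemma quatC2_mul (p q : Quaternion ℝ) :
    quatC2 (p * q) = star (quatC1 p) * quatC2 q + quatC2 p * quatC1 q := by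
  simp [quatC1, quatC2, Complex.ext_iff, Quaternion.imJ_mul, Quaternion.imK_mul,
    Complex.mul_re, Complex.mul_im] <;> constructor <;> ring
lemma quatC1_star (q : Quaternion ℝ) : quatC1 (star q) = star (quatC1 q) := by
  simp [quatC1, Complex.ext_iff]
lemma quatC2_star (q : Quaternion ℝ) : quatC2 (star q) = - quatC2 q := by
  simp [quatC2, Complex.ext_iff]


noncomputable def quatC1Hom : Quaternion ℝ →+ ℂ :=
  { toFun := quatC1, map_zero' := quatC1_zero, map_add' := quatC1_add }
noncomputable def quatC2Hom : Quaternion ℝ →+ ℂ :=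
  { toFun := quatC2, map_zero' := quatC2_zero, map_add' := quatC2_add }

lemma quatC1_sum {α : Type*} (s : Finset α) (f : α → Quaternion ℝ) :
    quatC1 (∑ i ∈ s, f i) = ∑ i ∈ s, quatC1 (f i) := map_sum quatC1Hom f s
lemma quatC2_sum {α : Type*} (s : Finset α) (f : α → Quaternion ℝ) :
    quatC2 (∑ i ∈ s, f i) = ∑ i ∈ s, quatC2 (f i) := map_sum quatC2Hom f s

variable {m p q : Type*} [Fintype m] [DecidableEq m] [Fintype p] [DecidableEq p]
  [Fintype q] [DecidableEq q]

@[simp] lemma Zmat_apply11 (M : Matrix m m (Quaternion ℝ)) (i j : m) :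
    Zmat M (Sum.inl i) (Sum.inl j) = quatC1 (M i j) := rfl
@[simp] lemma Zmat_apply12 (M : Matrix m m (Quaternion ℝ)) (i j : m) :
    Zmat M (Sum.inl i) (Sum.inr j) = -star (quatC2 (M i j)) := rfl
@[simp] lemma Zmat_apply21 (M : Matrix m m (Quaternion ℝ)) (i j : m) :
    Zmat M (Sum.inr i) (Sum.inl j) = quatC2 (M i j) := rfl
@[simp] lemma Zmat_apply22 (M : Matrix m m (Quaternion ℝ)) (i j : m) :
    Zmat M (Sum.inr i) (Sum.inr j) = star (quatC1 (M i j)) := rfl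

lemma Zmat_one : Zmat (1 : Matrix m m (Quaternion ℝ)) = 1 := by
  ext i j
  rcases i with i | i <;> rcases j with j | j <;>
    simp [one_apply, apply_ite quatC1, apply_ite quatC2, quatC1_one, quatC2_one,
      quatC1_zero, quatC2_zero, Sum.inl.injEq, Sum.inr.injEq]

lemma Zmat_mul (A B : Matrix m m (Quaternion ℝ)) : Zmat (A * B) = Zmat A * Zmat B := by
  ext i j
  rcases i with i | i <;> rcases j with j | j <;>
    · simp only [Zmat_apply11, Zmat_apply12, Zmat_apply21, Zmat_apply22, mul_apply,
        Fintype.sum_sum_type, quatC1_sum, quatC2_sum, star_sum, neg_eq_iff_eq_neg,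
        ← Finset.sum_neg_distrib, ← Finset.sum_add_distrib]
      refine Finset.sum_congr rfl fun k _ => ?_
      simp only [quatC1_mul, quatC2_mul, star_add, star_mul', star_star, star_neg, star_sub]
      ring

lemma Zmat_conjTranspose (M : Matrix m m (Quaternion ℝ)) : Zmat Mᴴ = (Zmat M)ᴴ := by
  ext i j
  rcases i with i | i <;> rcases j with j | j <;>
    simp [conjTranspose_apply, quatC1_star, quatC2_star]

lemma Zmat_add (A B : Matrix m m (Quaternion ℝ)) : Zmat (A + B) = Zmat A + Zmat B := by
  ext i j
  rcases i with i | i <;> rcases j with j | j <;>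
    simp [quatC1_add, quatC2_add, star_add, neg_add, add_comm]

lemma Zmat_submatrix (M : Matrix p p (Quaternion ℝ)) (f : q → p) :
    Zmat (M.submatrix f f) = (Zmat M).submatrix (Sum.map f f) (Sum.map f f) := by
  ext i j
  rcases i with i | i <;> rcases j with j | j <;> rfl

lemma det_Zmat_reindex (e : q ≃ p) (M : Matrix p p (Quaternion ℝ)) :
    (Zmat (M.submatrix e e)).det = (Zmat M).det := by
  rw [Zmat_submatrix]
  have : (Sum.map (e : q → p) (e : q → p)) = ⇑(Equiv.sumCongr e e) := by
    funext x; rcases x with x | x <;> rfl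
  rw [this]
  exact det_submatrix_equiv_self _ _

lemma Zmat_fromBlocks (A : Matrix p p (Quaternion ℝ)) (D : Matrix q q (Quaternion ℝ)) :
    Zmat (fromBlocks A 0 0 D) =
      (fromBlocks (Zmat A) 0 0 (Zmat D)).submatrix
        (Equiv.sumSumSumComm p q p q) (Equiv.sumSumSumComm p q p q) := by
  ext i j
  rcases i with (i | i) | (i | i) <;> rcases j with (j | j) | (j | j) <;>
    simp [Equiv.sumSumSumComm, quatC1_zero, quatC2_zero]

lemma det_Zmat_fromBlocks (A : Matrix p p (Quaternion ℝ)) (D : Matrix q q (Quaternion ℝ)) :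
    (Zmat (fromBlocks A 0 0 D)).det = (Zmat A).det * (Zmat D).det := by
  rw [Zmat_fromBlocks, det_submatrix_equiv_self, det_fromBlocks_zero₂₁]

def e2unit : (Unit ⊕ Unit) ≃ Fin 2 where
  toFun := Sum.elim (fun _ => 0) (fun _ => 1)
  invFun := ![Sum.inl (), Sum.inr ()]
  left_inv := by rintro (⟨⟩ | ⟨⟩) <;> rfl
  right_inv := by intro x; fin_cases x <;> rfl

lemma det_Zmat_unit (D : Matrix Unit Unit (Quaternion ℝ)) :
    (Zmat D).det = ((Quaternion.normSq (D () ()) : ℝ) : ℂ) := by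
  have : (Zmat D).det = ((Zmat D).submatrix (e2unit.symm) (e2unit.symm)).det :=
    (det_submatrix_equiv_self e2unit.symm _).symm
  rw [this, det_fin_two]
  show Zmat D (Sum.inl ()) (Sum.inl ()) * Zmat D (Sum.inr ()) (Sum.inr ())
      - Zmat D (Sum.inl ()) (Sum.inr ()) * Zmat D (Sum.inr ()) (Sum.inl ()) = _
  simp only [Zmat_apply11, Zmat_apply12, Zmat_apply21, Zmat_apply22]
  set d := D () ()
  simp only [Complex.ext_iff, Complex.mul_re, Complex.mul_im, Complex.sub_re, Complex.sub_im,
    Complex.neg_re, Complex.neg_im, Complex.conj_re, Complex.conj_im, Complex.ofReal_re,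
    Complex.ofReal_im, Quaternion.normSq_def', quatC1, quatC2, Complex.star_def]
  constructor <;> ring

lemma det_Zmat_one_add_stdBasisMatrix {i j : m} (hij : i ≠ j) (c : Quaternion ℝ) :
    (Zmat (1 + single i j c)).det = 1 := by
  set N₁ := single (Sum.inl i : m ⊕ m) (Sum.inl j : m ⊕ m) (quatC1 c) with hN1
  set N₂ := single (Sum.inl i : m ⊕ m) (Sum.inr j : m ⊕ m) (-star (quatC2 c)) with hN2
  set N₃ := single (Sum.inr i : m ⊕ m) (Sum.inl j : m ⊕ m) (quatC2 c) with hN3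
  set N₄ := single (Sum.inr i : m ⊕ m) (Sum.inr j : m ⊕ m) (star (quatC1 c)) with hN4
  have hZstd : Zmat (single i j c) = N₁ + N₂ + N₃ + N₄ := by
    ext a b
    rcases a with a | a <;> rcases b with b | b <;>
      simp [hN1, hN2, hN3, hN4, single, apply_ite quatC1, apply_ite quatC2,
        quatC1_zero, quatC2_zero, apply_ite (star : ℂ → ℂ), apply_ite (Neg.neg : ℂ → ℂ)]
  have key : Zmat (1 + single i j c) = (1 + N₁) * (1 + N₂) * ((1 + N₃) * (1 + N₄)) := by
    have h12 : N₁ * N₂ = 0 := single_mul_single_of_ne _ _ _ _ (by simp [hij.symm]) _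
    have h13 : N₁ * N₃ = 0 := single_mul_single_of_ne _ _ _ _ (by simp) _
    have h14 : N₁ * N₄ = 0 := single_mul_single_of_ne _ _ _ _ (by simp) _
    have h23 : N₂ * N₃ = 0 := single_mul_single_of_ne _ _ _ _ (by simp [hij.symm]) _
    have h24 : N₂ * N₄ = 0 := single_mul_single_of_ne _ _ _ _ (by simp [hij.symm]) _
    have h34 : N₃ * N₄ = 0 := single_mul_single_of_ne _ _ _ _ (by simp [hij.symm]) _
    rw [Zmat_add, Zmat_one, hZstd]
    simp only [mul_add, add_mul, mul_one, one_mul, h12, h13, h14, h23, h24, h34,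
      zero_mul, mul_zero, add_zero, zero_add]
    abel
  rw [key, det_mul, det_mul, det_mul]
  have d1 : (1 + N₁).det = 1 := det_transvection_of_ne _ _ (by simp [hij]) _
  have d2 : (1 + N₂).det = 1 := det_transvection_of_ne _ _ (by simp) _
  have d3 : (1 + N₃).det = 1 := det_transvection_of_ne _ _ (by simp) _
  have d4 : (1 + N₄).det = 1 := det_transvection_of_ne _ _ (by simp [hij]) _
  rw [d1, d2, d3, d4]; ring


end Lemmas

open QPort in
lemma det_Zmat_TS {m : Type*} [Fintype m] [DecidableEq m] (t : QPort.TS m (Quaternion ℝ)) :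
    (Zmat t.toMatrix).det = 1 :=
  det_Zmat_one_add_stdBasisMatrix t.hij t.c

open QPort in
lemma det_Zmat_TS_list {m : Type*} [Fintype m] [DecidableEq m]
    (L : List (QPort.TS m (Quaternion ℝ))) :
    (Zmat ((L.map QPort.TS.toMatrix).prod)).det = 1 := by
  induction L with
  | nil => simp [Zmat_one]
  | cons t L IH =>
      rw [List.map_cons, List.prod_cons, Zmat_mul, det_mul, IH, det_Zmat_TS, one_mul]

noncomputable def eFin (r : ℕ) : (Fin r ⊕ Unit) ≃ Fin (r + 1) :=
  (Equiv.sumCongr (Equiv.refl (Fin r)) (Equiv.ofUnique Unit (Fin 1))).trans finSumFinEquiv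

lemma det_Zmat_nonneg : ∀ (r : ℕ) (M : Matrix (Fin r) (Fin r) (Quaternion ℝ)),
    ∃ t : ℝ, 0 ≤ t ∧ (Zmat M).det = (t : ℂ) := by
  intro r
  induction r with
  | zero => intro M; exact ⟨1, zero_le_one, by simp [Matrix.det_isEmpty]⟩
  | succ r IH =>
      intro M
      set N := M.submatrix (eFin r) (eFin r) with hN
      have hdet : (Zmat N).det = (Zmat M).det := det_Zmat_reindex _ _
      obtain ⟨L, L', h⟩ :=
        QPort.Pivot.exists_isTwoBlockDiagonal_list_transvec_mul_mul_list_transvec N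
      set P := (L.map QPort.TS.toMatrix).prod * N * (L'.map QPort.TS.toMatrix).prod with hP
      have hPdet : (Zmat P).det = (Zmat N).det := by
        rw [hP, Zmat_mul, Zmat_mul, det_mul, det_mul, det_Zmat_TS_list, det_Zmat_TS_list,
          one_mul, mul_one]
      have hblocks : fromBlocks P.toBlocks₁₁ 0 0 P.toBlocks₂₂ = P := by
        have := Matrix.fromBlocks_toBlocks P
        rwa [h.1, h.2] at this
      obtain ⟨t, ht, htv⟩ := IH P.toBlocks₁₁
      refine ⟨t * Quaternion.normSq (P.toBlocks₂₂ () ()), ?_, ?_⟩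
      · have : (0:ℝ) ≤ Quaternion.normSq (P.toBlocks₂₂ () ()) := by
          rw [Quaternion.normSq_def']; positivity
        exact mul_nonneg ht this
      · rw [← hdet, ← hPdet, ← hblocks, det_Zmat_fromBlocks, htv, det_Zmat_unit,
          Matrix.toBlocks_fromBlocks₂₂]
        push_cast
        ring

theorem qdet_real (n : ℕ) (M : Matrix (Fin n) (Fin n) (Quaternion ℝ)) :
    star (Zmat M).det = (Zmat M).det := by
  obtain ⟨t, _, htv⟩ := det_Zmat_nonneg n M
  rw [htv, Complex.star_def, Complex.conj_ofReal]


/-- `det 𝒵[M†] = det 𝒵[M]`; in particular unitary quaternionic matrices have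
q-determinant `1`. -/
theorem qdet_conjTranspose (n : ℕ) :
    (∀ M : Matrix (Fin n) (Fin n) (Quaternion ℝ), (Zmat Mᴴ).det = (Zmat M).det) ∧
    (∀ U : Matrix (Fin n) (Fin n) (Quaternion ℝ), Uᴴ * U = 1 → (Zmat U).det = 1) := by

  have part1 : ∀ M : Matrix (Fin n) (Fin n) (Quaternion ℝ), (Zmat Mᴴ).det = (Zmat M).det := by
    intro M
    rw [Zmat_conjTranspose, Matrix.det_conjTranspose, qdet_real]
  refine ⟨part1, ?_⟩
  intro U hU
  have hmul : (Zmat Uᴴ).det * (Zmat U).det = 1 := by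
    rw [← det_mul, ← Zmat_mul, hU, Zmat_one, det_one]
  rw [part1 U] at hmul
  obtain ⟨t, ht, htv⟩ := det_Zmat_nonneg n U
  rw [htv] at hmul
  rw [htv]
  have h2 : (t:ℂ) * t = 1 := hmul
  have h3 : t * t = 1 := by exact_mod_cast h2
  have h4 : t = 1 := by nlinarith
  rw [h4]; norm_num
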